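/- Let n ≥ 1 and let g_1,…,g_{n+2} be real constants. Define Q : ℝ^n × ℝ^{n+1} → ℝ by Q(x,z) = exp( g_1 e^{z_1} + Σ_{i=1}^{n} ( e^{x_i − z_i} + g_{i+1} e^{z_{i+1} − x_i} ) + g_{n+2} e^{−z_{n+1} − x_n} ). Then for all x ∈ ℝ^n, z ∈ ℝ^{n+1}: −(1/2) Σ_{i=1}^{n} ∂²Q/∂x_i² + [ g_1 e^{x_1} + Σ_{i=1}^{n−1} g_{i+1} e^{x_{i+1} − x_i} + 2 g_{n+1} g_{n+2} e^{−2 x_n} ] Q = −(1/2) Σ_{i=1}^{n+1} ∂²Q/∂z_i² + [ (g_1/2)( e^{z_1} + g_1 e^{2 z_1} ) + Σ_{i=1}^{n} g_{i+1} e^{z_{i+1} − z_i} + g_{n+2} e^{−z_{n+1} − z_n} ] Q. That is, Q intertwines the quadratic Hamiltonians of the twisted affine A^{(2)}_{2n} closed Toda chain and of the BC^{(2)}_{n+1} closed Toda chain. -/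

import Mathlib

open Real

/-- Second partial derivative of `f` in the `i`-th coordinate at `x`. -/
noncomputable def pd2 {k : ℕ} (f : (Fin k → ℝ) → ℝ) (i : Fin k) (x : Fin k → ℝ) : ℝ :=
  deriv (deriv (fun t : ℝ => f (Function.update x i t))) (x i)

/-- The elementary kernel intertwining the twisted affine `A^{(2)}_{2n}` and
`BC^{(2)}_{n+1}` closed Toda chains (`n = m + 1 ≥ 1`):
`Q(x,z) = exp( g_1 e^{z_1} + Σ_{i=1}^{n} ( e^{x_i − z_i} + g_{i+1} e^{z_{i+1} − x_i} ) + g_{n+2} e^{−z_{n+1} − x_n} )`. -/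
noncomputable def Qker (m : ℕ) (g : Fin (m + 3) → ℝ)
    (x : Fin (m + 1) → ℝ) (z : Fin (m + 2) → ℝ) : ℝ :=
  Real.exp (g 0 * Real.exp (z 0)
    + (∑ i : Fin (m + 1), (Real.exp (x i - z i.castSucc)
        + g i.succ.castSucc * Real.exp (z i.succ - x i)))
    + g (Fin.last (m + 2)) * Real.exp (-z (Fin.last (m + 1)) - x (Fin.last m)))

/-!
`Q = e^φ`, where `φ = d + Σ (a_i + b_i) + c` is a sum of the exponentials
`a_i = e^{x_i − z_i}`, `b_i = g_{i+1} e^{z_{i+1} − x_i}`, `c = g_{n+2} e^{−z_{n+1} − x_n}` and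
`d = g_1 e^{z_1}`, each of them, in either set of variables `y`, a constant or a constant times
`e^{±y_p}`.
Hence `∂²_{y_p} e^φ = ((∂_{y_p} φ)² + ∂²_{y_p} φ) e^φ` with both derivatives again linear in
`a, b, c, d`, and both Hamiltonians applied to `Q` give `Q` times a quadratic polynomial in them.
The potentials are quadratic as well (`g_{i+1} e^{x_{i+1} − x_i} = b_i a_{i+1}`,
`g_{i+1} e^{z_{i+1} − z_i} = a_i b_i`, ...): the cross terms `a_i b_i` of `|∇_x φ|²` reproduce the
`BC^{(2)}_{n+1}` potential, the shifted cross terms `b_i a_{i+1}` of `|∇_z φ|²` the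
`A^{(2)}_{2n}` potential, and `(g_1/2)(e^{z_1} + g_1 e^{2 z_1}) = (d + d²)/2` accounts for the
extra `d` in `|∇_z φ|² + Δ_z φ`.
-/

open Function Finset

theorem Fin.cons_apply_eq_ite_add_sum {R : Type*} [AddCommMonoid R] {n : ℕ} (d : R)
    (b : Fin n → R) (j : Fin (n + 1)) :
    (Fin.cons d b : Fin (n + 1) → R) j =
      (if j = 0 then d else 0) + ∑ i, if j = i.succ then b i else 0 := by
  cases j using Fin.cases <;> simp [eq_comm]

theorem Fin.snoc_apply_eq_sum_add_ite {R : Type*} [AddCommMonoid R] {n : ℕ} (a : Fin n → R)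
    (c : R) (j : Fin (n + 1)) :
    (Fin.snoc a c : Fin (n + 1) → R) j =
      (∑ i, if j = i.castSucc then a i else 0) + if j = Fin.last n then c else 0 := by
  cases j using Fin.lastCases <;> simp [eq_comm]

theorem Fin.sum_comp_cons {R M : Type*} [AddCommMonoid M] {n : ℕ} (f : R → M) (d : R)
    (b : Fin n → R) :
    ∑ j, f ((Fin.cons d b : Fin (n + 1) → R) j) = f d + ∑ i, f (b i) := by
  simp [Fin.sum_univ_succ]

theorem Fin.sum_comp_snoc {R M : Type*} [AddCommMonoid M] {n : ℕ} (f : R → M) (a : Fin n → R)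
    (c : R) :
    ∑ j, f ((Fin.snoc a c : Fin (n + 1) → R) j) = ∑ i, f (a i) + f c := by
  simp [Fin.sum_univ_castSucc]

theorem Fin.sum_cons_mul_snoc {R : Type*} [AddCommMonoid R] [Mul R] {n : ℕ} (d c : R)
    (a b : Fin (n + 1) → R) :
    ∑ j, (Fin.cons d b : Fin (n + 2) → R) j * (Fin.snoc a c : Fin (n + 2) → R) j =
      d * a 0 + ∑ k : Fin n, b k.castSucc * a k.succ + b (Fin.last n) * c := by
  have h0 : (Fin.snoc a c : Fin (n + 2) → R) 0 = a 0 := Fin.snoc_castSucc (α := fun _ => R) c a 0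
  rw [Fin.sum_univ_succ, Fin.sum_univ_castSucc]
  simp only [Fin.cons_zero, Fin.cons_succ, h0]
  simp only [Fin.succ_castSucc, Fin.snoc_castSucc, Fin.succ_last, Fin.snoc_last, add_assoc]

section LineDerivs

variable {ι : Type*} [DecidableEq ι]

def HasLineDerivs (φ : (ι → ℝ) → ℝ) (φ' φ'' : ι → (ι → ℝ) → ℝ) : Prop :=
  ∀ i y, HasDerivAt (fun t => φ (update y i t)) (φ' i y) (y i) ∧
    HasDerivAt (fun t => φ' i (update y i t)) (φ'' i y) (y i)

namespace HasLineDerivs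

variable {φ ψ : (ι → ℝ) → ℝ} {φ' φ'' ψ' ψ'' : ι → (ι → ℝ) → ℝ}

theorem const (c : ℝ) : HasLineDerivs (ι := ι) (fun _ => c) (fun _ _ => 0) (fun _ _ => 0) :=
  fun _ _ => ⟨hasDerivAt_const _ _, hasDerivAt_const _ _⟩

theorem add (hφ : HasLineDerivs φ φ' φ'') (hψ : HasLineDerivs ψ ψ' ψ'') :
    HasLineDerivs (fun y => φ y + ψ y) (fun i y => φ' i y + ψ' i y)
      (fun i y => φ'' i y + ψ'' i y) :=
  fun i y => ⟨(hφ i y).1.add (hψ i y).1, (hφ i y).2.add (hψ i y).2⟩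

theorem sum {κ : Type*} (s : Finset κ) {φ : κ → (ι → ℝ) → ℝ} {φ' φ'' : κ → ι → (ι → ℝ) → ℝ}
    (h : ∀ j ∈ s, HasLineDerivs (φ j) (φ' j) (φ'' j)) :
    HasLineDerivs (fun y => ∑ j ∈ s, φ j y) (fun i y => ∑ j ∈ s, φ' j i y)
      (fun i y => ∑ j ∈ s, φ'' j i y) :=
  fun i y => ⟨HasDerivAt.fun_sum fun j hj => (h j hj i y).1,
    HasDerivAt.fun_sum fun j hj => (h j hj i y).2⟩

theorem congr (h : HasLineDerivs φ φ' φ'') (h' : ∀ i y, φ' i y = ψ' i y)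
    (h'' : ∀ i y, φ'' i y = ψ'' i y) : HasLineDerivs φ ψ' ψ'' := by
  obtain rfl : φ' = ψ' := funext fun i => funext (h' i)
  obtain rfl : φ'' = ψ'' := funext fun i => funext (h'' i)
  exact h

end HasLineDerivs

theorem hasDerivAt_update_of_eq_mul_exp {T : (ι → ℝ) → ℝ} {p : ι} {s c β : ℝ}
    (hT : ∀ y, T y = c * exp (s * y p + β)) (i : ι) (y : ι → ℝ) :
    HasDerivAt (fun t => T (update y i t)) (s * if i = p then T y else 0) (y i) := by
  by_cases hi : i = p
  · subst hi
    simp only [hT, update_self, if_true]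
    exact ((((hasDerivAt_id (y i)).const_mul s).add_const β).exp.const_mul c).congr_deriv
      (by simp only [id, mul_one]; ring)
  · simp only [hT, update_of_ne (Ne.symm hi), if_neg hi, mul_zero]
    exact hasDerivAt_const _ _

theorem hasLineDerivs_of_eq_mul_exp {T : (ι → ℝ) → ℝ} (p : ι) (s c β : ℝ)
    (hT : ∀ y, T y = c * exp (s * y p + β)) :
    HasLineDerivs T (fun i y => s * if i = p then T y else 0)
      (fun i y => s ^ 2 * if i = p then T y else 0) := by
  intro i y
  refine ⟨hasDerivAt_update_of_eq_mul_exp hT i y, ?_⟩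
  have hT' : ∀ y, (s * if i = p then T y else 0) =
      (s * if i = p then c else 0) * exp (s * y p + β) := fun y => by
    split_ifs <;> simp [hT, mul_assoc]
  exact (hasDerivAt_update_of_eq_mul_exp hT' i y).congr_deriv
    (by by_cases i = p <;> simp [*, pow_two, mul_assoc])

end LineDerivs

theorem pd2_eq_of_hasLineDerivs {k : ℕ} {f φ : (Fin k → ℝ) → ℝ}
    {φ' φ'' : Fin k → (Fin k → ℝ) → ℝ} (h : HasLineDerivs φ φ' φ'')
    (hf : ∀ y, f y = exp (φ y)) (i : Fin k) (y : Fin k → ℝ) :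
    pd2 f i y = (φ' i y ^ 2 + φ'' i y) * f y := by
  have hderiv : deriv (fun t => f (update y i t)) =
      fun t => f (update y i t) * φ' i (update y i t) := by
    funext t
    have h1 := (h i (update y i t)).1
    simp only [update_idem, update_self] at h1
    simp only [hf]
    exact h1.exp.deriv
  have h2 := (h i y).1.exp.fun_mul (h i y).2
  simp only [update_eq_self, ← hf] at h2
  rw [pd2, hderiv, h2.deriv]
  ring

noncomputable section

namespace Qker

variable {m : ℕ} (g : Fin (m + 3) → ℝ) (x : Fin (m + 1) → ℝ) (z : Fin (m + 2) → ℝ)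

def a (i : Fin (m + 1)) : ℝ := exp (x i - z i.castSucc)

def b (i : Fin (m + 1)) : ℝ := g i.succ.castSucc * exp (z i.succ - x i)

def c : ℝ := g (Fin.last (m + 2)) * exp (-z (Fin.last (m + 1)) - x (Fin.last m))

def d : ℝ := g 0 * exp (z 0)

def exponent : ℝ := d g z + ∑ i, (a x z i + b g x z i) + c g x z

-- In the variables `z`, `plusTerm j` and `minusTerm j` are the exponentials of `Qker` that vary
-- like `e^{z_j}` and like `e^{-z_j}`.
def plusTerm : Fin (m + 2) → ℝ := Fin.cons (d g z) (b g x z)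

def minusTerm : Fin (m + 2) → ℝ := Fin.snoc (a x z) (c g x z)

theorem hasLineDerivs_exponent_left :
    HasLineDerivs (fun u => exponent g u z)
      (fun i u => a u z i - b g u z i - if i = Fin.last m then c g u z else 0)
      (fun i u => a u z i + b g u z i + if i = Fin.last m then c g u z else 0) := by
  refine (((HasLineDerivs.const (d g z)).add (HasLineDerivs.sum univ fun i _ =>
    (hasLineDerivs_of_eq_mul_exp (T := fun u => a u z i) i 1 1 (-z i.castSucc)
      fun u => by simp [a, sub_eq_add_neg]).add
    (hasLineDerivs_of_eq_mul_exp (T := fun u => b g u z i) i (-1) _ (z i.succ)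
      fun u => by rw [b]; ring_nf))).add
    (hasLineDerivs_of_eq_mul_exp (T := fun u => c g u z) (Fin.last m) (-1) _
      (-z (Fin.last (m + 1))) fun u => by rw [c]; ring_nf)).congr
    (fun i u => ?_) (fun i u => ?_)
  · simp only [one_mul, neg_one_mul, zero_add, sum_add_distrib, sum_neg_distrib, sum_ite_eq,
      mem_univ, if_true]
    ring
  · simp only [one_pow, neg_one_sq, one_mul, zero_add, sum_add_distrib, sum_ite_eq, mem_univ,
      if_true]

theorem hasLineDerivs_exponent_right :
    HasLineDerivs (fun v => exponent g x v)
      (fun j v => plusTerm g x v j - minusTerm g x v j)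
      (fun j v => plusTerm g x v j + minusTerm g x v j) := by
  refine (((hasLineDerivs_of_eq_mul_exp (T := fun v => d g v) 0 1 (g 0) 0
      fun v => by simp [d]).add (HasLineDerivs.sum univ fun i _ =>
    (hasLineDerivs_of_eq_mul_exp (T := fun v => a x v i) i.castSucc (-1) 1 (x i)
      fun v => by rw [a]; ring_nf).add
    (hasLineDerivs_of_eq_mul_exp (T := fun v => b g x v i) i.succ 1 _ (-x i)
      fun v => by rw [b]; ring_nf))).add
    (hasLineDerivs_of_eq_mul_exp (T := fun v => c g x v) (Fin.last (m + 1)) (-1) _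
      (-x (Fin.last m)) fun v => by rw [c]; ring_nf)).congr ?_ ?_ <;>
  · intro j v
    simp only [plusTerm, minusTerm, Fin.cons_apply_eq_ite_add_sum, Fin.snoc_apply_eq_sum_add_ite,
      one_pow, neg_one_sq, one_mul, neg_one_mul, sum_add_distrib, sum_neg_distrib]
    ring

theorem pd2_left (i : Fin (m + 1)) :
    pd2 (fun u => Qker m g u z) i x =
      ((a x z i - b g x z i - if i = Fin.last m then c g x z else 0) ^ 2
        + (a x z i + b g x z i + if i = Fin.last m then c g x z else 0)) * Qker m g x z :=
  pd2_eq_of_hasLineDerivs (hasLineDerivs_exponent_left g z) (fun _ => rfl) i x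

theorem pd2_right (j : Fin (m + 2)) :
    pd2 (fun v => Qker m g x v) j z =
      ((plusTerm g x z j - minusTerm g x z j) ^ 2 + (plusTerm g x z j + minusTerm g x z j))
        * Qker m g x z :=
  pd2_eq_of_hasLineDerivs (hasLineDerivs_exponent_right g x) (fun _ => rfl) j z

theorem sum_pd2_left :
    ∑ i, pd2 (fun u => Qker m g u z) i x =
      (∑ i, (a x z i ^ 2 + a x z i + b g x z i ^ 2 + b g x z i) - 2 * ∑ i, a x z i * b g x z i
        - 2 * (a x z (Fin.last m) - b g x z (Fin.last m)) * c g x z + c g x z ^ 2 + c g x z)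
        * Qker m g x z := by
  have hterm : ∀ i, (a x z i - b g x z i - if i = Fin.last m then c g x z else 0) ^ 2
      + (a x z i + b g x z i + if i = Fin.last m then c g x z else 0) =
      a x z i ^ 2 + a x z i + b g x z i ^ 2 + b g x z i - 2 * (a x z i * b g x z i)
        + if i = Fin.last m then c g x z ^ 2 + c g x z - 2 * (a x z i - b g x z i) * c g x z
          else 0 := fun i => by
    split_ifs <;> ring
  simp only [pd2_left, hterm, ← sum_mul, sum_add_distrib, sum_sub_distrib, ← mul_sum,
    sum_ite_eq', mem_univ, if_true]
  ring

theorem sum_pd2_right :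
    ∑ j, pd2 (fun v => Qker m g x v) j z =
      (d g z ^ 2 + d g z + ∑ i, (a x z i ^ 2 + a x z i + b g x z i ^ 2 + b g x z i)
        + c g x z ^ 2 + c g x z
        - 2 * (d g z * a x z 0 + ∑ k : Fin m, b g x z k.castSucc * a x z k.succ
          + b g x z (Fin.last m) * c g x z)) * Qker m g x z := by
  have hsplit : ∑ j, ((plusTerm g x z j - minusTerm g x z j) ^ 2
      + (plusTerm g x z j + minusTerm g x z j)) =
      ∑ j, (plusTerm g x z j ^ 2 + plusTerm g x z j)
        + ∑ j, (minusTerm g x z j ^ 2 + minusTerm g x z j)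
        - 2 * ∑ j, plusTerm g x z j * minusTerm g x z j := by
    rw [mul_sum, ← sum_add_distrib, ← sum_sub_distrib]
    exact sum_congr rfl fun j _ => by ring
  simp only [pd2_right, ← sum_mul]
  rw [hsplit, plusTerm, minusTerm, Fin.sum_comp_cons (fun t => t ^ 2 + t),
    Fin.sum_comp_snoc (fun t => t ^ 2 + t), Fin.sum_cons_mul_snoc]
  simp only [sum_add_distrib]
  ring

theorem potential_left_eq :
    g 0 * exp (x 0)
      + ∑ k : Fin m, g k.succ.castSucc.castSucc * exp (x k.succ - x k.castSucc)
      + 2 * (g (Fin.last (m + 1)).castSucc * g (Fin.last (m + 2))) * exp (-(2 * x (Fin.last m)))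
    = d g z * a x z 0 + ∑ k : Fin m, b g x z k.castSucc * a x z k.succ
      + 2 * (b g x z (Fin.last m) * c g x z) := by
  congr 1
  congr 1
  · rw [d, a, mul_assoc, ← exp_add, Fin.castSucc_zero]
    ring_nf
  · refine sum_congr rfl fun k _ => ?_
    rw [b, a, Fin.succ_castSucc, mul_assoc, ← exp_add]
    ring_nf
  · rw [b, c, Fin.succ_last, mul_mul_mul_comm, ← exp_add]
    ring_nf

theorem potential_right_eq :
    g 0 / 2 * (exp (z 0) + g 0 * exp (2 * z 0))
      + ∑ i : Fin (m + 1), g i.succ.castSucc * exp (z i.succ - z i.castSucc)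
      + g (Fin.last (m + 2)) * exp (-z (Fin.last (m + 1)) - z (Fin.last m).castSucc)
    = (d g z + d g z ^ 2) / 2 + ∑ i, a x z i * b g x z i + a x z (Fin.last m) * c g x z := by
  congr 1
  congr 1
  · rw [d, mul_pow, ← exp_nat_mul]
    ring_nf
  · refine sum_congr rfl fun i _ => ?_
    rw [a, b, mul_left_comm, ← exp_add]
    ring_nf
  · rw [a, c, mul_left_comm, ← exp_add]
    ring_nf

end Qker

end

open Qker in
/-- The kernel `Q` intertwines the quadratic Hamiltonians of the twisted affine
`A^{(2)}_{2n}` and `BC^{(2)}_{n+1}` closed Toda chains, `n = m + 1 ≥ 1`. -/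
theorem A2even_BC2_intertwining (m : ℕ) (g : Fin (m + 3) → ℝ)
    (x : Fin (m + 1) → ℝ) (z : Fin (m + 2) → ℝ) :
    -(1/2) * (∑ i : Fin (m + 1), pd2 (fun u => Qker m g u z) i x)
      + (g 0 * Real.exp (x 0)
          + (∑ i : Fin m, g i.succ.castSucc.castSucc * Real.exp (x i.succ - x i.castSucc))
          + 2 * (g (Fin.last (m + 1)).castSucc * g (Fin.last (m + 2)))
              * Real.exp (-(2 * x (Fin.last m)))) * Qker m g x z
    = -(1/2) * (∑ i : Fin (m + 2), pd2 (fun v => Qker m g x v) i z)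
      + ((g 0 / 2) * (Real.exp (z 0) + g 0 * Real.exp (2 * z 0))
          + (∑ i : Fin (m + 1), g i.succ.castSucc * Real.exp (z i.succ - z i.castSucc))
          + g (Fin.last (m + 2))
              * Real.exp (-z (Fin.last (m + 1)) - z (Fin.last m).castSucc)) * Qker m g x z := by
  rw [sum_pd2_left, sum_pd2_right, potential_left_eq g x z, potential_right_eq g x z]
  ring
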